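/- arXiv:1906.00030 — 2 statements merged into one kernel-verified Lean document; each statement's English description precedes it below -/
import Mathlib

section
/- Let c be a c-divergence of a nondegenerate cost, with primal geodesic γ(s) (in primal coordinates ξ(s)) and dual geodesic σ(t) (in dual coordinates η'(t)) satisfying the geodesic equations ξ̈ᵏ + c_{ij:m̄}c^{m̄:k} ξ̇ⁱξ̇ʲ = 0 and η̈'^{k̄} + c^{k̄:m}c_{m:īj̄} η̇'^ī η̇'^j̄ = 0, with γ(0) = σ(0) = x ∈ G. Then ∂⁴/∂s²∂t² D[γ(s):σ(t)]|_{s=t=0} = (c_{ij:k̄ℓ̄} − c_{ij:m̄}c^{m̄:m}c_{m:k̄ℓ̄}) ξ̇ⁱξ̇ʲ η̇'^k̄ η̇'^ℓ̄ = −2 sec̄_u(X, Y), where X = ξ̇(0) ⊕ 0 and Y = 0 ⊕ η̇'(0). -/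
noncomputable def pd1 {n : ℕ} (F : (Fin n → ℝ) → (Fin n → ℝ) → ℝ) (i : Fin n) :
    (Fin n → ℝ) → (Fin n → ℝ) → ℝ :=
  fun x y => fderiv ℝ (fun x' => F x' y) x (Pi.single i 1)

noncomputable def pd2 {n : ℕ} (F : (Fin n → ℝ) → (Fin n → ℝ) → ℝ) (j : Fin n) :
    (Fin n → ℝ) → (Fin n → ℝ) → ℝ :=
  fun x y => fderiv ℝ (fun y' => F x y') y (Pi.single j 1)

/-- Second derivative of a real function of one variable. -/
noncomputable def d2 (f : ℝ → ℝ) : ℝ → ℝ := deriv (deriv f)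


variable {n : ℕ}

local notation "E" => (Fin n → ℝ)
local notation "Z" => ((Fin n → ℝ) × (Fin n → ℝ))

noncomputable def Dv {n : ℕ} (v : (Fin n → ℝ) × (Fin n → ℝ))
    (F : (Fin n → ℝ) × (Fin n → ℝ) → ℝ) : (Fin n → ℝ) × (Fin n → ℝ) → ℝ :=
  fun z => fderiv ℝ F z v

lemma Dv_contDiff {F : Z → ℝ} (hF : ContDiff ℝ (⊤ : ℕ∞) F) (v : Z) :
    ContDiff ℝ (⊤ : ℕ∞) (Dv v F) :=
  (hF.fderiv_right (by simp)).clm_apply contDiff_const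

lemma Dv_comm {F : Z → ℝ} (hF : ContDiff ℝ (⊤ : ℕ∞) F) (u v : Z) :
    Dv u (Dv v F) = Dv v (Dv u F) := by
  funext z
  have hd : Differentiable ℝ F := hF.differentiable (by simp)
  have hd' : Differentiable ℝ (fderiv ℝ F) := (hF.fderiv_right (m := (⊤ : ℕ∞)) (by simp)).differentiable (by simp)
  have key : ∀ w w' : Z, Dv w (Dv w' F) z = fderiv ℝ (fderiv ℝ F) z w w' := by
    intro w w'
    have : fderiv ℝ (fun y => (fderiv ℝ F y) w') z
        = ((fderiv ℝ F z).comp (fderiv ℝ (fun _ : Z => w') z))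
          + (fderiv ℝ (fderiv ℝ F) z).flip w' :=
      fderiv_clm_apply (hd' z) (differentiableAt_const _)
    show fderiv ℝ (fun y => (fderiv ℝ F y) w') z w = _
    rw [this]
    simp [fderiv_const]
  rw [key u v, key v u]
  exact (hF.contDiffAt.isSymmSndFDerivAt (by rw [minSmoothness_of_isRCLikeNormedField]; exact WithTop.coe_le_coe.mpr (le_top : (2:ℕ∞) ≤ ⊤))) u v

lemma deriv_pi_comp {η : ℝ → (Fin n → ℝ)} (hη : ContDiff ℝ (⊤ : ℕ∞) η) (k : Fin n) (t : ℝ) :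
    deriv (fun u => η u k) t = deriv η t k := by
  have h1 : HasDerivAt η (deriv η t) t :=
    ((hη.differentiable (by simp)) t).hasDerivAt
  have h2 : HasDerivAt (fun u => η u k) ((ContinuousLinearMap.proj k :
      (Fin n → ℝ) →L[ℝ] ℝ) (deriv η t)) t :=
    (ContinuousLinearMap.proj k : (Fin n → ℝ) →L[ℝ] ℝ).hasFDerivAt.comp_hasDerivAt t h1
  exact h2.deriv

lemma contDiff_pi_comp {η : ℝ → (Fin n → ℝ)} (hη : ContDiff ℝ (⊤ : ℕ∞) η) (k : Fin n) :
    ContDiff ℝ (⊤ : ℕ∞) (fun u => η u k) :=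
  (ContinuousLinearMap.proj k : (Fin n → ℝ) →L[ℝ] ℝ).contDiff.comp hη

lemma contDiff_deriv' {f : ℝ → ℝ} (hf : ContDiff ℝ (⊤ : ℕ∞) f) : ContDiff ℝ (⊤ : ℕ∞) (deriv f) := by
  have h : deriv f = fun x => fderiv ℝ f x 1 := rfl
  rw [h]
  exact (hf.fderiv_right (by simp)).clm_apply contDiff_const

lemma contDiff_deriv_pi_comp {η : ℝ → (Fin n → ℝ)} (hη : ContDiff ℝ (⊤ : ℕ∞) η) (k : Fin n) :
    ContDiff ℝ (⊤ : ℕ∞) (deriv (fun u => η u k)) :=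
  contDiff_deriv' (contDiff_pi_comp hη k)

lemma pi_sum_single (x : Fin n → ℝ) : ∑ k, x k • (Pi.single k 1 : Fin n → ℝ) = x := by
  funext j
  simp [Pi.single_apply, Finset.sum_apply]

/-- derivative along the curve in the second slot -/
lemma hasDerivAt_snd {F : ((Fin n → ℝ) × (Fin n → ℝ)) → ℝ} (hF : ContDiff ℝ (⊤ : ℕ∞) F)
    {η : ℝ → (Fin n → ℝ)} (hη : ContDiff ℝ (⊤ : ℕ∞) η) (x : Fin n → ℝ) (t : ℝ) :
    HasDerivAt (fun u => F (x, η u))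
      (∑ k, Dv ((0 : Fin n → ℝ), (Pi.single k 1 : Fin n → ℝ)) F (x, η t) * deriv (fun u => η u k) t) t := by
  have h1 : HasDerivAt η (deriv η t) t := ((hη.differentiable (by simp)) t).hasDerivAt
  have hγ : HasDerivAt (fun u => (x, η u)) ((0 : Fin n → ℝ), deriv η t) t :=
    (hasDerivAt_const t x).prodMk h1
  have hFd : HasFDerivAt F (fderiv ℝ F (x, η t)) (x, η t) :=
    ((hF.differentiable (by simp)) (x, η t)).hasFDerivAt
  have h2 : HasDerivAt (fun u => F (x, η u))
      (fderiv ℝ F (x, η t) ((0 : Fin n → ℝ), deriv η t)) t :=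
    hFd.comp_hasDerivAt t hγ
  convert h2 using 1
  have hsum : ((0 : Fin n → ℝ), deriv η t)
      = ∑ k, deriv η t k • ((0 : Fin n → ℝ), (Pi.single k 1 : Fin n → ℝ)) := by
    rw [Prod.ext_iff]
    constructor
    · rw [Prod.fst_sum]
      simp
    · rw [Prod.snd_sum]
      simp [pi_sum_single (deriv η t)]
  rw [hsum, map_sum]
  refine Finset.sum_congr rfl fun k _ => ?_
  rw [ContinuousLinearMap.map_smul, smul_eq_mul, deriv_pi_comp hη]
  exact mul_comm _ _


/-- derivative along the curve in the first slot -/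
lemma hasDerivAt_fst {F : ((Fin n → ℝ) × (Fin n → ℝ)) → ℝ} (hF : ContDiff ℝ (⊤ : ℕ∞) F)
    {ξ : ℝ → (Fin n → ℝ)} (hξ : ContDiff ℝ (⊤ : ℕ∞) ξ) (y : Fin n → ℝ) (t : ℝ) :
    HasDerivAt (fun u => F (ξ u, y))
      (∑ k, Dv ((Pi.single k 1 : Fin n → ℝ), (0 : Fin n → ℝ)) F (ξ t, y)
        * deriv (fun u => ξ u k) t) t := by
  have h1 : HasDerivAt ξ (deriv ξ t) t := ((hξ.differentiable (by simp)) t).hasDerivAt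
  have hγ : HasDerivAt (fun u => (ξ u, y)) (deriv ξ t, (0 : Fin n → ℝ)) t :=
    h1.prodMk (hasDerivAt_const t y)
  have hFd : HasFDerivAt F (fderiv ℝ F (ξ t, y)) (ξ t, y) :=
    ((hF.differentiable (by simp)) (ξ t, y)).hasFDerivAt
  have h2 : HasDerivAt (fun u => F (ξ u, y))
      (fderiv ℝ F (ξ t, y) (deriv ξ t, (0 : Fin n → ℝ))) t :=
    hFd.comp_hasDerivAt t hγ
  convert h2 using 1
  have hsum : (deriv ξ t, (0 : Fin n → ℝ))
      = ∑ k, deriv ξ t k • ((Pi.single k 1 : Fin n → ℝ), (0 : Fin n → ℝ)) := by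
    rw [Prod.ext_iff]
    constructor
    · rw [Prod.fst_sum]
      simp [pi_sum_single (deriv ξ t)]
    · rw [Prod.snd_sum]
      simp
  rw [hsum, map_sum]
  refine Finset.sum_congr rfl fun k _ => ?_
  rw [ContinuousLinearMap.map_smul, smul_eq_mul, deriv_pi_comp hξ]
  exact mul_comm _ _

lemma contDiff_comp_snd {F : ((Fin n → ℝ) × (Fin n → ℝ)) → ℝ} (hF : ContDiff ℝ (⊤ : ℕ∞) F)
    {η : ℝ → (Fin n → ℝ)} (hη : ContDiff ℝ (⊤ : ℕ∞) η) (x : Fin n → ℝ) :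
    ContDiff ℝ (⊤ : ℕ∞) (fun u => F (x, η u)) :=
  hF.comp (contDiff_const.prodMk hη)

lemma contDiff_comp_fst {F : ((Fin n → ℝ) × (Fin n → ℝ)) → ℝ} (hF : ContDiff ℝ (⊤ : ℕ∞) F)
    {ξ : ℝ → (Fin n → ℝ)} (hξ : ContDiff ℝ (⊤ : ℕ∞) ξ) (y : Fin n → ℝ) :
    ContDiff ℝ (⊤ : ℕ∞) (fun u => F (ξ u, y)) :=
  hF.comp (hξ.prodMk contDiff_const)

/-- second derivative along the curve in the second slot -/
lemma d2_snd {F : ((Fin n → ℝ) × (Fin n → ℝ)) → ℝ} (hF : ContDiff ℝ (⊤ : ℕ∞) F)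
    {η : ℝ → (Fin n → ℝ)} (hη : ContDiff ℝ (⊤ : ℕ∞) η) (x : Fin n → ℝ) :
    d2 (fun u => F (x, η u)) 0
      = ∑ k, ((∑ l, Dv ((0 : Fin n → ℝ), (Pi.single l 1 : Fin n → ℝ))
            (Dv ((0 : Fin n → ℝ), (Pi.single k 1 : Fin n → ℝ)) F) (x, η 0)
            * deriv (fun u => η u l) 0) * deriv (fun u => η u k) 0
          + Dv ((0 : Fin n → ℝ), (Pi.single k 1 : Fin n → ℝ)) F (x, η 0)
            * d2 (fun u => η u k) 0) := by
  have hder : deriv (fun u => F (x, η u))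
      = fun t => ∑ k, Dv ((0 : Fin n → ℝ), (Pi.single k 1 : Fin n → ℝ)) F (x, η t)
          * deriv (fun u => η u k) t := by
    funext t
    exact (hasDerivAt_snd hF hη x t).deriv
  rw [d2, hder]
  have hdiff : ∀ k : Fin n, ∀ t : ℝ, DifferentiableAt ℝ
      (fun t => Dv ((0 : Fin n → ℝ), (Pi.single k 1 : Fin n → ℝ)) F (x, η t)
        * deriv (fun u => η u k) t) t := fun k t =>
    (((contDiff_comp_snd (Dv_contDiff hF _) hη x).differentiable (by simp)) t).mul
      (((contDiff_deriv_pi_comp hη k).differentiable (by simp)) t)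
  rw [deriv_fun_sum (fun k _ => hdiff k 0)]
  refine Finset.sum_congr rfl fun k _ => ?_
  rw [deriv_fun_mul (((contDiff_comp_snd (Dv_contDiff hF _) hη x).differentiable (by simp)) 0)
    (((contDiff_deriv_pi_comp hη k).differentiable (by simp)) 0)]
  congr 1
  congr 1
  exact (hasDerivAt_snd (Dv_contDiff hF _) hη x 0).deriv

/-- second derivative along the curve in the first slot -/
lemma d2_fst {F : ((Fin n → ℝ) × (Fin n → ℝ)) → ℝ} (hF : ContDiff ℝ (⊤ : ℕ∞) F)
    {ξ : ℝ → (Fin n → ℝ)} (hξ : ContDiff ℝ (⊤ : ℕ∞) ξ) (y : Fin n → ℝ) :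
    d2 (fun u => F (ξ u, y)) 0
      = ∑ i, ((∑ j, Dv ((Pi.single j 1 : Fin n → ℝ), (0 : Fin n → ℝ))
            (Dv ((Pi.single i 1 : Fin n → ℝ), (0 : Fin n → ℝ)) F) (ξ 0, y)
            * deriv (fun u => ξ u j) 0) * deriv (fun u => ξ u i) 0
          + Dv ((Pi.single i 1 : Fin n → ℝ), (0 : Fin n → ℝ)) F (ξ 0, y)
            * d2 (fun u => ξ u i) 0) := by
  have hder : deriv (fun u => F (ξ u, y))
      = fun t => ∑ i, Dv ((Pi.single i 1 : Fin n → ℝ), (0 : Fin n → ℝ)) F (ξ t, y)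
          * deriv (fun u => ξ u i) t := by
    funext t
    exact (hasDerivAt_fst hF hξ y t).deriv
  rw [d2, hder]
  have hdiff : ∀ i : Fin n, ∀ t : ℝ, DifferentiableAt ℝ
      (fun t => Dv ((Pi.single i 1 : Fin n → ℝ), (0 : Fin n → ℝ)) F (ξ t, y)
        * deriv (fun u => ξ u i) t) t := fun i t =>
    (((contDiff_comp_fst (Dv_contDiff hF _) hξ y).differentiable (by simp)) t).mul
      (((contDiff_deriv_pi_comp hξ i).differentiable (by simp)) t)
  rw [deriv_fun_sum (fun i _ => hdiff i 0)]
  refine Finset.sum_congr rfl fun i _ => ?_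
  rw [deriv_fun_mul (((contDiff_comp_fst (Dv_contDiff hF _) hξ y).differentiable (by simp)) 0)
    (((contDiff_deriv_pi_comp hξ i).differentiable (by simp)) 0)]
  congr 1
  congr 1
  exact (hasDerivAt_fst (Dv_contDiff hF _) hξ y 0).deriv

lemma d2_sum' {ι : Type*} [Fintype ι] (f : ι → ℝ → ℝ) (hf : ∀ i, ContDiff ℝ (⊤ : ℕ∞) (f i)) (t : ℝ) :
    d2 (fun x => ∑ i, f i x) t = ∑ i, d2 (f i) t := by
  rw [d2]
  have h1 : deriv (fun x => ∑ i, f i x) = fun x => ∑ i, deriv (f i) x :=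
    funext fun x => deriv_fun_sum (fun i _ => ((hf i).differentiable (by simp)) x)
  rw [h1, deriv_fun_sum (fun i _ => ((contDiff_deriv' (hf i)).differentiable (by simp)) t)]
  rfl

lemma d2_mul_const (f : ℝ → ℝ) (hf : ContDiff ℝ (⊤ : ℕ∞) f) (r t : ℝ) :
    d2 (fun x => f x * r) t = d2 f t * r := by
  rw [d2]
  have h1 : deriv (fun x => f x * r) = fun x => deriv f x * r :=
    funext fun x => deriv_mul_const ((hf.differentiable (by simp)) x) r
  rw [h1]
  exact deriv_mul_const (((contDiff_deriv' hf).differentiable (by simp)) t) r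

lemma d2_sub' (f g : ℝ → ℝ) (hf : ContDiff ℝ (⊤ : ℕ∞) f) (hg : ContDiff ℝ (⊤ : ℕ∞) g) (t : ℝ) :
    d2 (fun x => f x - g x) t = d2 f t - d2 g t := by
  rw [d2]
  have h1 : deriv (fun x => f x - g x) = fun x => deriv f x - deriv g x :=
    funext fun x => deriv_fun_sub ((hf.differentiable (by simp)) x) ((hg.differentiable (by simp)) x)
  rw [h1]
  exact deriv_fun_sub (((contDiff_deriv' hf).differentiable (by simp)) t)
    (((contDiff_deriv' hg).differentiable (by simp)) t)

lemma d2_sub_const (f : ℝ → ℝ) (r t : ℝ) :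
    d2 (fun x => f x - r) t = d2 f t := by
  rw [d2]
  have h1 : deriv (fun x => f x - r) = fun x => deriv f x :=
    funext fun x => deriv_sub_const r
  rw [h1]
  rfl

lemma pd1_eq {G : ((Fin n → ℝ) × (Fin n → ℝ)) → ℝ} (hG : ContDiff ℝ (⊤ : ℕ∞) G)
    (c' : (Fin n → ℝ) → (Fin n → ℝ) → ℝ) (hrel : ∀ a b, c' a b = G (a, b))
    (i : Fin n) (x y : Fin n → ℝ) :
    pd1 c' i x y
      = Dv ((Pi.single i 1 : Fin n → ℝ), (0 : Fin n → ℝ)) G (x, y) := by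
  have hfun : (fun x' => c' x' y) = (fun x' => G (x', y)) := funext fun x' => hrel x' y
  have h1 : HasFDerivAt (fun x' : Fin n → ℝ => G (x', y))
      ((fderiv ℝ G (x, y)).comp
        (ContinuousLinearMap.inl ℝ (Fin n → ℝ) (Fin n → ℝ))) x :=
    (((hG.differentiable (by simp)) (x, y)).hasFDerivAt).comp x (hasFDerivAt_prodMk_left x y)
  show fderiv ℝ (fun x' => c' x' y) x (Pi.single i 1) = _
  rw [hfun, h1.fderiv]
  simp [Dv]

lemma pd2_eq {G : ((Fin n → ℝ) × (Fin n → ℝ)) → ℝ} (hG : ContDiff ℝ (⊤ : ℕ∞) G)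
    (c' : (Fin n → ℝ) → (Fin n → ℝ) → ℝ) (hrel : ∀ a b, c' a b = G (a, b))
    (j : Fin n) (x y : Fin n → ℝ) :
    pd2 c' j x y
      = Dv ((0 : Fin n → ℝ), (Pi.single j 1 : Fin n → ℝ)) G (x, y) := by
  have hfun : (fun y' => c' x y') = (fun y' => G (x, y')) := funext fun y' => hrel x y'
  have h1 : HasFDerivAt (fun y' : Fin n → ℝ => G (x, y'))
      ((fderiv ℝ G (x, y)).comp
        (ContinuousLinearMap.inr ℝ (Fin n → ℝ) (Fin n → ℝ))) y :=
    (((hG.differentiable (by simp)) (x, y)).hasFDerivAt).comp y (hasFDerivAt_prodMk_right x y)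
  show fderiv ℝ (fun y' => c' x y') y (Pi.single j 1) = _
  rw [hfun, h1.fderiv]
  simp [Dv]

section pdc
variable {c : (Fin n → ℝ) → (Fin n → ℝ) → ℝ}
  (hc : ContDiff ℝ (⊤ : ℕ∞) (fun z : (Fin n → ℝ) × (Fin n → ℝ) => c z.1 z.2))

local notation "ee" i => ((Pi.single i 1 : Fin n → ℝ), (0 : Fin n → ℝ))
local notation "ff" i => ((0 : Fin n → ℝ), (Pi.single i 1 : Fin n → ℝ))

include hc

lemma pdc1 (i : Fin n) : pd1 c i = fun a b => Dv (ee i) (fun z : (Fin n → ℝ) × (Fin n → ℝ) => c z.1 z.2) (a, b) :=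
  funext fun a => funext fun b => pd1_eq hc c (fun _ _ => rfl) i a b

lemma pdc2 (i k : Fin n) (x y : Fin n → ℝ) :
    pd2 (pd1 c i) k x y = Dv (ff k) (Dv (ee i) (fun z : (Fin n → ℝ) × (Fin n → ℝ) => c z.1 z.2)) (x, y) := by
  rw [pdc1 hc i]
  exact pd2_eq (Dv_contDiff hc _) _ (fun _ _ => rfl) k x y

lemma pdc3a (i j m : Fin n) (x y : Fin n → ℝ) :
    pd2 (pd1 (pd1 c i) j) m x y
      = Dv (ff m) (Dv (ee j) (Dv (ee i) (fun z : (Fin n → ℝ) × (Fin n → ℝ) => c z.1 z.2))) (x, y) := by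
  have h2 : pd1 (pd1 c i) j = fun a b => Dv (ee j) (Dv (ee i) (fun z : (Fin n → ℝ) × (Fin n → ℝ) => c z.1 z.2)) (a, b) := by
    rw [pdc1 hc i]
    exact funext fun a => funext fun b => pd1_eq (Dv_contDiff hc _) _ (fun _ _ => rfl) j a b
  rw [h2]
  exact pd2_eq (Dv_contDiff (Dv_contDiff hc _) _) _ (fun _ _ => rfl) m x y

lemma pdc3b (m k l : Fin n) (x y : Fin n → ℝ) :
    pd2 (pd2 (pd1 c m) k) l x y
      = Dv (ff l) (Dv (ff k) (Dv (ee m) (fun z : (Fin n → ℝ) × (Fin n → ℝ) => c z.1 z.2))) (x, y) := by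
  have h2 : pd2 (pd1 c m) k = fun a b => Dv (ff k) (Dv (ee m) (fun z : (Fin n → ℝ) × (Fin n → ℝ) => c z.1 z.2)) (a, b) := by
    rw [pdc1 hc m]
    exact funext fun a => funext fun b => pd2_eq (Dv_contDiff hc _) _ (fun _ _ => rfl) k a b
  rw [h2]
  exact pd2_eq (Dv_contDiff (Dv_contDiff hc _) _) _ (fun _ _ => rfl) l x y

lemma pdc4 (i j k l : Fin n) (x y : Fin n → ℝ) :
    pd2 (pd2 (pd1 (pd1 c i) j) k) l x y
      = Dv (ff l) (Dv (ff k) (Dv (ee j) (Dv (ee i) (fun z : (Fin n → ℝ) × (Fin n → ℝ) => c z.1 z.2)))) (x, y) := by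
  have h2 : pd1 (pd1 c i) j = fun a b => Dv (ee j) (Dv (ee i) (fun z : (Fin n → ℝ) × (Fin n → ℝ) => c z.1 z.2)) (a, b) := by
    rw [pdc1 hc i]
    exact funext fun a => funext fun b => pd1_eq (Dv_contDiff hc _) _ (fun _ _ => rfl) j a b
  have h3 : pd2 (pd1 (pd1 c i) j) k
      = fun a b => Dv (ff k) (Dv (ee j) (Dv (ee i) (fun z : (Fin n → ℝ) × (Fin n → ℝ) => c z.1 z.2))) (a, b) := by
    rw [h2]
    exact funext fun a => funext fun b => pd2_eq (Dv_contDiff (Dv_contDiff hc _) _) _ (fun _ _ => rfl) k a b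
  rw [h3]
  exact pd2_eq (Dv_contDiff (Dv_contDiff (Dv_contDiff hc _) _) _) _ (fun _ _ => rfl) l x y

end pdc

lemma d2_add' (f g : ℝ → ℝ) (hf : ContDiff ℝ (⊤ : ℕ∞) f) (hg : ContDiff ℝ (⊤ : ℕ∞) g) (t : ℝ) :
    d2 (fun x => f x + g x) t = d2 f t + d2 g t := by
  rw [d2]
  have h1 : deriv (fun x => f x + g x) = fun x => deriv f x + deriv g x :=
    funext fun x => deriv_fun_add ((hf.differentiable (by simp)) x) ((hg.differentiable (by simp)) x)
  rw [h1]
  exact deriv_fun_add (((contDiff_deriv' hf).differentiable (by simp)) t)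
    (((contDiff_deriv' hg).differentiable (by simp)) t)

lemma rot3 {M : Type*} [AddCommMonoid M] {α β γ : Type*} [Fintype α] [Fintype β] [Fintype γ]
    (f : α → β → γ → M) : ∑ a, ∑ b, ∑ c, f a b c = ∑ b, ∑ c, ∑ a, f a b c := by
  rw [Finset.sum_comm]
  refine Finset.sum_congr rfl fun b _ => ?_
  exact Finset.sum_comm

lemma rot4 {M : Type*} [AddCommMonoid M] {α β γ δ : Type*}
    [Fintype α] [Fintype β] [Fintype γ] [Fintype δ] (f : α → β → γ → δ → M) :
    ∑ a, ∑ b, ∑ c, ∑ d, f a b c d = ∑ c, ∑ d, ∑ a, ∑ b, f a b c d := by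
  rw [rot3 (fun a b c => ∑ d, f a b c d)]
  rw [rot3 (fun b c a => ∑ d, f a b c d)]
  refine Finset.sum_congr rfl fun c _ => ?_
  exact (rot3 (fun a b d => f a b c d)).trans (rot3 (fun b d a => f a b c d))

lemma final_algebra {n : ℕ} (T4 : Fin n → Fin n → Fin n → Fin n → ℝ)
    (C3a C3b : Fin n → Fin n → Fin n → ℝ) (CM cinv : Matrix (Fin n) (Fin n) ℝ)
    (Xd Xdd Yd Ydd : Fin n → ℝ)
    (hdelta : ∀ i m, (∑ k, CM i k * cinv k m) = if i = m then 1 else 0)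
    (hYdd : ∀ k, Ydd k + ∑ i, ∑ j, ∑ m, cinv k m * C3b m i j * Yd i * Yd j = 0) :
    ∑ k, ((∑ l, (∑ i, ((∑ j, T4 i j k l * Xd j) * Xd i + C3b i k l * Xdd i)) * Yd l) * Yd k
        + (∑ i, ((∑ j, C3a i j k * Xd j) * Xd i + CM i k * Xdd i)) * Ydd k)
      = ∑ i, ∑ j, ∑ k, ∑ l,
          (T4 i j k l - ∑ m, ∑ m', C3a i j m * cinv m m' * C3b m' k l)
            * Xd i * Xd j * Yd k * Yd l := by
  have hY : ∀ k, Ydd k = -∑ m, cinv k m * (∑ a, ∑ b, C3b m a b * Yd b * Yd a) := by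
    intro k
    have h0 := hYdd k
    have h1 : ∑ i, ∑ j, ∑ m, cinv k m * C3b m i j * Yd i * Yd j
        = ∑ m, cinv k m * (∑ a, ∑ b, C3b m a b * Yd b * Yd a) := by
      rw [← rot3 (fun m i j => cinv k m * C3b m i j * Yd i * Yd j)]
      refine Finset.sum_congr rfl fun m _ => ?_
      rw [Finset.mul_sum]
      refine Finset.sum_congr rfl fun a _ => ?_
      rw [Finset.mul_sum]
      refine Finset.sum_congr rfl fun b _ => ?_
      ring
    linarith
  -- split the left side into four pieces
  have hsplit : ∑ k, ((∑ l, (∑ i, ((∑ j, T4 i j k l * Xd j) * Xd i + C3b i k l * Xdd i))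
          * Yd l) * Yd k
        + (∑ i, ((∑ j, C3a i j k * Xd j) * Xd i + CM i k * Xdd i)) * Ydd k)
      = (∑ k, ∑ l, ∑ i, ∑ j, T4 i j k l * Xd j * Xd i * Yd l * Yd k)
        + (∑ k, ∑ l, ∑ i, C3b i k l * Xdd i * Yd l * Yd k)
        + ((∑ k, ∑ i, ∑ j, C3a i j k * Xd j * Xd i * Ydd k)
        + (∑ k, ∑ i, CM i k * Xdd i * Ydd k)) := by
    simp only [Finset.sum_mul, add_mul, Finset.sum_add_distrib]
  -- S2
  have hS2 : ∑ k, ∑ l, ∑ i, C3b i k l * Xdd i * Yd l * Yd k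
      = ∑ i, (∑ a, ∑ b, C3b i a b * Yd b * Yd a) * Xdd i := by
    rw [← rot3 (fun i k l => C3b i k l * Xdd i * Yd l * Yd k)]
    refine Finset.sum_congr rfl fun i _ => ?_
    rw [Finset.sum_mul]
    refine Finset.sum_congr rfl fun a _ => ?_
    rw [Finset.sum_mul]
    refine Finset.sum_congr rfl fun b _ => ?_
    ring
  -- S4
  have hS4 : ∑ k, ∑ i, CM i k * Xdd i * Ydd k
      = -∑ i, (∑ a, ∑ b, C3b i a b * Yd b * Yd a) * Xdd i := by
    have hpt : ∀ k i, CM i k * Xdd i * Ydd k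
        = -(∑ m, CM i k * cinv k m * (∑ a, ∑ b, C3b m a b * Yd b * Yd a) * Xdd i) := by
      intro k i
      rw [hY k, mul_neg]
      congr 1
      simp only [Finset.mul_sum]
      refine Finset.sum_congr rfl fun m _ => ?_
      simp only [Finset.sum_mul]
      refine Finset.sum_congr rfl fun a _ => ?_
      refine Finset.sum_congr rfl fun b _ => ?_
      ring
    have step1 : ∑ k, ∑ i, CM i k * Xdd i * Ydd k
        = -∑ k, ∑ i, ∑ m, CM i k * cinv k m
            * (∑ a, ∑ b, C3b m a b * Yd b * Yd a) * Xdd i := by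
      rw [Finset.sum_congr rfl fun k _ => Finset.sum_congr rfl fun i _ => hpt k i]
      simp only [Finset.sum_neg_distrib]
    rw [step1, neg_inj, rot3 (fun k i m => CM i k * cinv k m
      * (∑ a, ∑ b, C3b m a b * Yd b * Yd a) * Xdd i)]
    refine Finset.sum_congr rfl fun i _ => ?_
    have step2 : ∀ m : Fin n, ∑ k, CM i k * cinv k m
          * (∑ a, ∑ b, C3b m a b * Yd b * Yd a) * Xdd i
        = (if i = m then 1 else 0) * ((∑ a, ∑ b, C3b m a b * Yd b * Yd a) * Xdd i) := by
      intro m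
      rw [← hdelta i m, Finset.sum_mul]
      refine Finset.sum_congr rfl fun k _ => ?_
      ring
    rw [Finset.sum_congr rfl fun m _ => step2 m]
    simp [Finset.sum_ite_eq, Finset.mem_univ]
  -- S3
  have hS3 : ∑ k, ∑ i, ∑ j, C3a i j k * Xd j * Xd i * Ydd k
      = -∑ i, ∑ j, ∑ a, ∑ b, ∑ k, ∑ m,
          C3a i j k * cinv k m * C3b m a b * Xd j * Xd i * Yd b * Yd a := by
    have step1 : ∑ k, ∑ i, ∑ j, C3a i j k * Xd j * Xd i * Ydd k
        = -∑ k, ∑ i, ∑ j, ∑ m, ∑ a, ∑ b,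
            C3a i j k * cinv k m * C3b m a b * Xd j * Xd i * Yd b * Yd a := by
      have hpt : ∀ k i j, C3a i j k * Xd j * Xd i * Ydd k
          = -(∑ m, ∑ a, ∑ b,
              C3a i j k * cinv k m * C3b m a b * Xd j * Xd i * Yd b * Yd a) := by
        intro k i j
        rw [hY k, mul_neg]
        congr 1
        simp only [Finset.mul_sum]
        refine Finset.sum_congr rfl fun m _ => ?_
        refine Finset.sum_congr rfl fun a _ => ?_
        refine Finset.sum_congr rfl fun b _ => ?_
        ring
      rw [Finset.sum_congr rfl fun k _ => Finset.sum_congr rfl fun i _ =>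
        Finset.sum_congr rfl fun j _ => hpt k i j]
      simp only [Finset.sum_neg_distrib]
    rw [step1, neg_inj,
      rot3 (fun k i j => ∑ m, ∑ a, ∑ b,
        C3a i j k * cinv k m * C3b m a b * Xd j * Xd i * Yd b * Yd a)]
    refine Finset.sum_congr rfl fun i _ => ?_
    refine Finset.sum_congr rfl fun j _ => ?_
    exact rot4 (fun k m a b => C3a i j k * cinv k m * C3b m a b * Xd j * Xd i * Yd b * Yd a)
  -- S1
  have hS1 : ∑ k, ∑ l, ∑ i, ∑ j, T4 i j k l * Xd j * Xd i * Yd l * Yd k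
      = ∑ i, ∑ j, ∑ k, ∑ l, T4 i j k l * Xd i * Xd j * Yd k * Yd l := by
    rw [rot4 (fun k l i j => T4 i j k l * Xd j * Xd i * Yd l * Yd k)]
    refine Finset.sum_congr rfl fun i _ => ?_
    refine Finset.sum_congr rfl fun j _ => ?_
    refine Finset.sum_congr rfl fun k _ => ?_
    refine Finset.sum_congr rfl fun l _ => ?_
    ring
  -- right-hand side
  have hRHS : ∑ i, ∑ j, ∑ k, ∑ l,
        (T4 i j k l - ∑ m, ∑ m', C3a i j m * cinv m m' * C3b m' k l)
          * Xd i * Xd j * Yd k * Yd l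
      = (∑ i, ∑ j, ∑ k, ∑ l, T4 i j k l * Xd i * Xd j * Yd k * Yd l)
        - ∑ i, ∑ j, ∑ a, ∑ b, ∑ k, ∑ m,
            C3a i j k * cinv k m * C3b m a b * Xd j * Xd i * Yd b * Yd a := by
    rw [← Finset.sum_sub_distrib]
    refine Finset.sum_congr rfl fun i _ => ?_
    rw [← Finset.sum_sub_distrib]
    refine Finset.sum_congr rfl fun j _ => ?_
    rw [← Finset.sum_sub_distrib]
    refine Finset.sum_congr rfl fun a _ => ?_
    rw [← Finset.sum_sub_distrib]
    refine Finset.sum_congr rfl fun b _ => ?_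
    rw [sub_mul, sub_mul, sub_mul, sub_mul]
    congr 1
    rw [Finset.sum_mul, Finset.sum_mul, Finset.sum_mul, Finset.sum_mul]
    refine Finset.sum_congr rfl fun k _ => ?_
    rw [Finset.sum_mul, Finset.sum_mul, Finset.sum_mul, Finset.sum_mul]
    refine Finset.sum_congr rfl fun m _ => ?_
    ring
  rw [hsplit, hS2, hS4, hS3, hS1, hRHS]
  ring

/-- along a primal geodesic `γ(s)` (primal coordinates `ξ(s)`) and a
dual geodesic `σ(t)` (dual coordinates `η'(t)`) with `γ(0) = σ(0) = x ∈ G`,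
`∂⁴/∂s²∂t² D[γ(s) : σ(t)]|₀ = (c_{ij:k̄ℓ̄} − c_{ij:m̄}c^{m̄:m}c_{m:k̄ℓ̄}) ξ̇ⁱξ̇ʲη̇'^k̄η̇'^ℓ̄
 = −2 sec̄_u(X, Y)` with `X = ξ̇(0) ⊕ 0`, `Y = 0 ⊕ η̇'(0)`. -/
theorem fourth_derivative_of_divergence_along_geodesics {n : ℕ}
    (c : (Fin n → ℝ) → (Fin n → ℝ) → ℝ)
    (hc : ContDiff ℝ (⊤ : ℕ∞) (fun z : (Fin n → ℝ) × (Fin n → ℝ) => c z.1 z.2))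
    (φ ψ : (Fin n → ℝ) → ℝ) (hφ : ContDiff ℝ (⊤ : ℕ∞) φ) (hψ : ContDiff ℝ (⊤ : ℕ∞) ψ)
    (D : (Fin n → ℝ) → (Fin n → ℝ) → ℝ)
    (hD : ∀ p q', D p q' = c p q' - φ p - ψ q')
    (ξ η : ℝ → (Fin n → ℝ))
    (hξ : ContDiff ℝ (⊤ : ℕ∞) ξ) (hη : ContDiff ℝ (⊤ : ℕ∞) η)
    (cinv : Matrix (Fin n) (Fin n) ℝ)
    (hcinv : (Matrix.of fun i j => pd2 (pd1 c i) j (ξ 0) (η 0)) * cinv = 1 ∧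
      cinv * (Matrix.of fun i j => pd2 (pd1 c i) j (ξ 0) (η 0)) = 1)
    -- primal geodesic equation at s = 0
    (hgeo1 : ∀ k : Fin n, d2 (fun s => ξ s k) 0
      + ∑ i, ∑ j, ∑ m, pd2 (pd1 (pd1 c i) j) m (ξ 0) (η 0) * cinv m k
          * deriv (fun s => ξ s i) 0 * deriv (fun s => ξ s j) 0 = 0)
    -- dual geodesic equation at t = 0
    (hgeo2 : ∀ k : Fin n, d2 (fun t => η t k) 0
      + ∑ i, ∑ j, ∑ m, cinv k m * pd2 (pd2 (pd1 c m) i) j (ξ 0) (η 0)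
          * deriv (fun t => η t i) 0 * deriv (fun t => η t j) 0 = 0) :
    (d2 (fun s => d2 (fun t => D (ξ s) (η t)) 0) 0
      = ∑ i, ∑ j, ∑ k, ∑ l,
          (pd2 (pd2 (pd1 (pd1 c i) j) k) l (ξ 0) (η 0)
            - ∑ m, ∑ m', pd2 (pd1 (pd1 c i) j) m (ξ 0) (η 0) * cinv m m'
                * pd2 (pd2 (pd1 c m') k) l (ξ 0) (η 0))
          * deriv (fun s => ξ s i) 0 * deriv (fun s => ξ s j) 0
          * deriv (fun t => η t k) 0 * deriv (fun t => η t l) 0) ∧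
    (d2 (fun s => d2 (fun t => D (ξ s) (η t)) 0) 0
      = -2 * ∑ i, ∑ k, ∑ l, ∑ j,
          ((1 / 2) * (-(pd2 (pd2 (pd1 (pd1 c i) j) k) l (ξ 0) (η 0))
            + ∑ β, ∑ a, pd2 (pd1 (pd1 c i) j) β (ξ 0) (η 0) * cinv β a
                * pd2 (pd2 (pd1 c a) k) l (ξ 0) (η 0)))
          * deriv (fun s => ξ s i) 0 * deriv (fun t => η t k) 0
          * deriv (fun t => η t l) 0 * deriv (fun s => ξ s j) 0) := by
  -- Step A : remove the potentials
  have hA0 : (fun s => d2 (fun t => D (ξ s) (η t)) 0)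
      = fun s => d2 (fun t => c (ξ s) (η t)) 0 - d2 (fun t => ψ (η t)) 0 := by
    funext s
    have hfun : (fun t => D (ξ s) (η t)) = fun t => (c (ξ s) (η t) - ψ (η t)) - φ (ξ s) := by
      funext t
      rw [hD]
      ring
    rw [hfun, d2_sub_const]
    exact d2_sub' _ _ (hc.comp (contDiff_const.prodMk hη)) (hψ.comp hη) 0
  have hA0' : d2 (fun s => d2 (fun t => D (ξ s) (η t)) 0) 0
      = d2 (fun s => d2 (fun t => c (ξ s) (η t)) 0) 0 := by
    rw [hA0]
    exact d2_sub_const _ _ _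
  -- Step B : expand the inner second derivative
  have hB : (fun s => d2 (fun t => c (ξ s) (η t)) 0) = fun s =>
      ∑ k, ((∑ l, Dv ((0 : Fin n → ℝ), (Pi.single l 1 : Fin n → ℝ)) (Dv ((0 : Fin n → ℝ), (Pi.single k 1 : Fin n → ℝ)) (fun z : (Fin n → ℝ) × (Fin n → ℝ) => c z.1 z.2)) (ξ s, η 0) * deriv (fun u => η u l) 0)
          * deriv (fun u => η u k) 0
        + Dv ((0 : Fin n → ℝ), (Pi.single k 1 : Fin n → ℝ)) (fun z : (Fin n → ℝ) × (Fin n → ℝ) => c z.1 z.2) (ξ s, η 0) * d2 (fun u => η u k) 0) :=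
    funext fun s => d2_snd hc hη (ξ s)
  -- smoothness facts
  have hQs : ∀ k l : Fin n, ContDiff ℝ (⊤ : ℕ∞) (fun s => Dv ((0 : Fin n → ℝ), (Pi.single l 1 : Fin n → ℝ)) (Dv ((0 : Fin n → ℝ), (Pi.single k 1 : Fin n → ℝ)) (fun z : (Fin n → ℝ) × (Fin n → ℝ) => c z.1 z.2)) (ξ s, η 0)) :=
    fun k l => contDiff_comp_fst (Dv_contDiff (Dv_contDiff hc _) _) hξ (η 0)
  have hPs : ∀ k : Fin n, ContDiff ℝ (⊤ : ℕ∞) (fun s => Dv ((0 : Fin n → ℝ), (Pi.single k 1 : Fin n → ℝ)) (fun z : (Fin n → ℝ) × (Fin n → ℝ) => c z.1 z.2) (ξ s, η 0)) :=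
    fun k => contDiff_comp_fst (Dv_contDiff hc _) hξ (η 0)
  have hsum : ∀ k : Fin n, ContDiff ℝ (⊤ : ℕ∞)
      (fun s => ∑ l, Dv ((0 : Fin n → ℝ), (Pi.single l 1 : Fin n → ℝ)) (Dv ((0 : Fin n → ℝ), (Pi.single k 1 : Fin n → ℝ)) (fun z : (Fin n → ℝ) × (Fin n → ℝ) => c z.1 z.2)) (ξ s, η 0) * deriv (fun u => η u l) 0) :=
    fun k => ContDiff.sum fun l _ => (hQs k l).mul contDiff_const
  have hg1 : ∀ k : Fin n, ContDiff ℝ (⊤ : ℕ∞)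
      (fun s => (∑ l, Dv ((0 : Fin n → ℝ), (Pi.single l 1 : Fin n → ℝ)) (Dv ((0 : Fin n → ℝ), (Pi.single k 1 : Fin n → ℝ)) (fun z : (Fin n → ℝ) × (Fin n → ℝ) => c z.1 z.2)) (ξ s, η 0) * deriv (fun u => η u l) 0) * deriv (fun u => η u k) 0) :=
    fun k => (hsum k).mul contDiff_const
  have hg2 : ∀ k : Fin n, ContDiff ℝ (⊤ : ℕ∞)
      (fun s => Dv ((0 : Fin n → ℝ), (Pi.single k 1 : Fin n → ℝ)) (fun z : (Fin n → ℝ) × (Fin n → ℝ) => c z.1 z.2) (ξ s, η 0) * d2 (fun u => η u k) 0) :=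
    fun k => (hPs k).mul contDiff_const
  have hterm : ∀ k : Fin n, ContDiff ℝ (⊤ : ℕ∞)
      (fun s => (∑ l, Dv ((0 : Fin n → ℝ), (Pi.single l 1 : Fin n → ℝ)) (Dv ((0 : Fin n → ℝ), (Pi.single k 1 : Fin n → ℝ)) (fun z : (Fin n → ℝ) × (Fin n → ℝ) => c z.1 z.2)) (ξ s, η 0) * deriv (fun u => η u l) 0) * deriv (fun u => η u k) 0
        + Dv ((0 : Fin n → ℝ), (Pi.single k 1 : Fin n → ℝ)) (fun z : (Fin n → ℝ) × (Fin n → ℝ) => c z.1 z.2) (ξ s, η 0) * d2 (fun u => η u k) 0) :=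
    fun k => (hg1 k).add (hg2 k)
  -- Step C : expand the outer second derivative
  have hC : d2 (fun s =>
      ∑ k, ((∑ l, Dv ((0 : Fin n → ℝ), (Pi.single l 1 : Fin n → ℝ)) (Dv ((0 : Fin n → ℝ), (Pi.single k 1 : Fin n → ℝ)) (fun z : (Fin n → ℝ) × (Fin n → ℝ) => c z.1 z.2)) (ξ s, η 0) * deriv (fun u => η u l) 0)
          * deriv (fun u => η u k) 0
        + Dv ((0 : Fin n → ℝ), (Pi.single k 1 : Fin n → ℝ)) (fun z : (Fin n → ℝ) × (Fin n → ℝ) => c z.1 z.2) (ξ s, η 0) * d2 (fun u => η u k) 0)) 0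
      = ∑ k, ((∑ l, (∑ i, ((∑ j, Dv ((Pi.single j 1 : Fin n → ℝ), (0 : Fin n → ℝ)) (Dv ((Pi.single i 1 : Fin n → ℝ), (0 : Fin n → ℝ)) (Dv ((0 : Fin n → ℝ), (Pi.single l 1 : Fin n → ℝ)) (Dv ((0 : Fin n → ℝ), (Pi.single k 1 : Fin n → ℝ)) (fun z : (Fin n → ℝ) × (Fin n → ℝ) => c z.1 z.2)))) (ξ 0, η 0) * deriv (fun u => ξ u j) 0) * deriv (fun u => ξ u i) 0
            + Dv ((Pi.single i 1 : Fin n → ℝ), (0 : Fin n → ℝ)) (Dv ((0 : Fin n → ℝ), (Pi.single l 1 : Fin n → ℝ)) (Dv ((0 : Fin n → ℝ), (Pi.single k 1 : Fin n → ℝ)) (fun z : (Fin n → ℝ) × (Fin n → ℝ) => c z.1 z.2))) (ξ 0, η 0) * d2 (fun u => ξ u i) 0)) * deriv (fun u => η u l) 0) * deriv (fun u => η u k) 0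
        + (∑ i, ((∑ j, Dv ((Pi.single j 1 : Fin n → ℝ), (0 : Fin n → ℝ)) (Dv ((Pi.single i 1 : Fin n → ℝ), (0 : Fin n → ℝ)) (Dv ((0 : Fin n → ℝ), (Pi.single k 1 : Fin n → ℝ)) (fun z : (Fin n → ℝ) × (Fin n → ℝ) => c z.1 z.2))) (ξ 0, η 0) * deriv (fun u => ξ u j) 0) * deriv (fun u => ξ u i) 0
            + Dv ((Pi.single i 1 : Fin n → ℝ), (0 : Fin n → ℝ)) (Dv ((0 : Fin n → ℝ), (Pi.single k 1 : Fin n → ℝ)) (fun z : (Fin n → ℝ) × (Fin n → ℝ) => c z.1 z.2)) (ξ 0, η 0) * d2 (fun u => ξ u i) 0)) * d2 (fun u => η u k) 0) := by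
    rw [d2_sum' _ hterm 0]
    refine Finset.sum_congr rfl fun k _ => ?_
    rw [d2_add' _ _ (hg1 k) (hg2 k) 0,
        d2_mul_const _ (hsum k) _ 0,
        d2_mul_const _ (hPs k) _ 0,
        d2_sum' _ (fun l => (hQs k l).mul contDiff_const) 0]
    congr 1
    · congr 1
      refine Finset.sum_congr rfl fun l _ => ?_
      rw [d2_mul_const _ (hQs k l) _ 0]
      congr 1
      exact d2_fst (Dv_contDiff (Dv_contDiff hc _) _) hξ (η 0)
    · congr 1
      exact d2_fst (Dv_contDiff hc _) hξ (η 0)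
  have hmain : d2 (fun s => d2 (fun t => D (ξ s) (η t)) 0) 0
      = ∑ k, ((∑ l, (∑ i, ((∑ j, Dv ((Pi.single j 1 : Fin n → ℝ), (0 : Fin n → ℝ)) (Dv ((Pi.single i 1 : Fin n → ℝ), (0 : Fin n → ℝ)) (Dv ((0 : Fin n → ℝ), (Pi.single l 1 : Fin n → ℝ)) (Dv ((0 : Fin n → ℝ), (Pi.single k 1 : Fin n → ℝ)) (fun z : (Fin n → ℝ) × (Fin n → ℝ) => c z.1 z.2)))) (ξ 0, η 0) * deriv (fun u => ξ u j) 0) * deriv (fun u => ξ u i) 0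
            + Dv ((Pi.single i 1 : Fin n → ℝ), (0 : Fin n → ℝ)) (Dv ((0 : Fin n → ℝ), (Pi.single l 1 : Fin n → ℝ)) (Dv ((0 : Fin n → ℝ), (Pi.single k 1 : Fin n → ℝ)) (fun z : (Fin n → ℝ) × (Fin n → ℝ) => c z.1 z.2))) (ξ 0, η 0) * d2 (fun u => ξ u i) 0)) * deriv (fun u => η u l) 0) * deriv (fun u => η u k) 0
        + (∑ i, ((∑ j, Dv ((Pi.single j 1 : Fin n → ℝ), (0 : Fin n → ℝ)) (Dv ((Pi.single i 1 : Fin n → ℝ), (0 : Fin n → ℝ)) (Dv ((0 : Fin n → ℝ), (Pi.single k 1 : Fin n → ℝ)) (fun z : (Fin n → ℝ) × (Fin n → ℝ) => c z.1 z.2))) (ξ 0, η 0) * deriv (fun u => ξ u j) 0) * deriv (fun u => ξ u i) 0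
            + Dv ((Pi.single i 1 : Fin n → ℝ), (0 : Fin n → ℝ)) (Dv ((0 : Fin n → ℝ), (Pi.single k 1 : Fin n → ℝ)) (fun z : (Fin n → ℝ) × (Fin n → ℝ) => c z.1 z.2)) (ξ 0, η 0) * d2 (fun u => ξ u i) 0)) * d2 (fun u => η u k) 0) := by
    rw [hA0', hB]
    exact hC
  -- reorder the mixed partial derivatives
  have hsw2 : ∀ i k : Fin n, Dv ((Pi.single i 1 : Fin n → ℝ), (0 : Fin n → ℝ)) (Dv ((0 : Fin n → ℝ), (Pi.single k 1 : Fin n → ℝ)) (fun z : (Fin n → ℝ) × (Fin n → ℝ) => c z.1 z.2))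
      = Dv ((0 : Fin n → ℝ), (Pi.single k 1 : Fin n → ℝ)) (Dv ((Pi.single i 1 : Fin n → ℝ), (0 : Fin n → ℝ)) (fun z : (Fin n → ℝ) × (Fin n → ℝ) => c z.1 z.2)) := fun i k => Dv_comm hc _ _
  have hsw3b : ∀ i k l : Fin n, Dv ((Pi.single i 1 : Fin n → ℝ), (0 : Fin n → ℝ)) (Dv ((0 : Fin n → ℝ), (Pi.single l 1 : Fin n → ℝ)) (Dv ((0 : Fin n → ℝ), (Pi.single k 1 : Fin n → ℝ)) (fun z : (Fin n → ℝ) × (Fin n → ℝ) => c z.1 z.2))) = Dv ((0 : Fin n → ℝ), (Pi.single l 1 : Fin n → ℝ)) (Dv ((0 : Fin n → ℝ), (Pi.single k 1 : Fin n → ℝ)) (Dv ((Pi.single i 1 : Fin n → ℝ), (0 : Fin n → ℝ)) (fun z : (Fin n → ℝ) × (Fin n → ℝ) => c z.1 z.2))) := by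
    intro i k l
    rw [Dv_comm (Dv_contDiff hc ((0 : Fin n → ℝ), (Pi.single k 1 : Fin n → ℝ))) ((Pi.single i 1 : Fin n → ℝ), (0 : Fin n → ℝ)) ((0 : Fin n → ℝ), (Pi.single l 1 : Fin n → ℝ)), hsw2 i k]
  have hsw3a : ∀ i j k : Fin n, Dv ((Pi.single j 1 : Fin n → ℝ), (0 : Fin n → ℝ)) (Dv ((Pi.single i 1 : Fin n → ℝ), (0 : Fin n → ℝ)) (Dv ((0 : Fin n → ℝ), (Pi.single k 1 : Fin n → ℝ)) (fun z : (Fin n → ℝ) × (Fin n → ℝ) => c z.1 z.2))) = Dv ((0 : Fin n → ℝ), (Pi.single k 1 : Fin n → ℝ)) (Dv ((Pi.single j 1 : Fin n → ℝ), (0 : Fin n → ℝ)) (Dv ((Pi.single i 1 : Fin n → ℝ), (0 : Fin n → ℝ)) (fun z : (Fin n → ℝ) × (Fin n → ℝ) => c z.1 z.2))) := by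
    intro i j k
    rw [hsw2 i k, Dv_comm (Dv_contDiff hc ((Pi.single i 1 : Fin n → ℝ), (0 : Fin n → ℝ))) ((Pi.single j 1 : Fin n → ℝ), (0 : Fin n → ℝ)) ((0 : Fin n → ℝ), (Pi.single k 1 : Fin n → ℝ))]
  have hsw4 : ∀ i j k l : Fin n, Dv ((Pi.single j 1 : Fin n → ℝ), (0 : Fin n → ℝ)) (Dv ((Pi.single i 1 : Fin n → ℝ), (0 : Fin n → ℝ)) (Dv ((0 : Fin n → ℝ), (Pi.single l 1 : Fin n → ℝ)) (Dv ((0 : Fin n → ℝ), (Pi.single k 1 : Fin n → ℝ)) (fun z : (Fin n → ℝ) × (Fin n → ℝ) => c z.1 z.2)))) = Dv ((0 : Fin n → ℝ), (Pi.single l 1 : Fin n → ℝ)) (Dv ((0 : Fin n → ℝ), (Pi.single k 1 : Fin n → ℝ)) (Dv ((Pi.single j 1 : Fin n → ℝ), (0 : Fin n → ℝ)) (Dv ((Pi.single i 1 : Fin n → ℝ), (0 : Fin n → ℝ)) (fun z : (Fin n → ℝ) × (Fin n → ℝ) => c z.1 z.2)))) := by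
    intro i j k l
    rw [hsw3b i k l,
      Dv_comm (Dv_contDiff (Dv_contDiff hc ((Pi.single i 1 : Fin n → ℝ), (0 : Fin n → ℝ))) ((0 : Fin n → ℝ), (Pi.single k 1 : Fin n → ℝ))) ((Pi.single j 1 : Fin n → ℝ), (0 : Fin n → ℝ)) ((0 : Fin n → ℝ), (Pi.single l 1 : Fin n → ℝ)),
      Dv_comm (Dv_contDiff hc ((Pi.single i 1 : Fin n → ℝ), (0 : Fin n → ℝ))) ((Pi.single j 1 : Fin n → ℝ), (0 : Fin n → ℝ)) ((0 : Fin n → ℝ), (Pi.single k 1 : Fin n → ℝ))]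
  have hmain2 : d2 (fun s => d2 (fun t => D (ξ s) (η t)) 0) 0
      = ∑ k, ((∑ l, (∑ i, ((∑ j, Dv ((0 : Fin n → ℝ), (Pi.single l 1 : Fin n → ℝ)) (Dv ((0 : Fin n → ℝ), (Pi.single k 1 : Fin n → ℝ)) (Dv ((Pi.single j 1 : Fin n → ℝ), (0 : Fin n → ℝ)) (Dv ((Pi.single i 1 : Fin n → ℝ), (0 : Fin n → ℝ)) (fun z : (Fin n → ℝ) × (Fin n → ℝ) => c z.1 z.2)))) (ξ 0, η 0) * deriv (fun u => ξ u j) 0) * deriv (fun u => ξ u i) 0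
            + Dv ((0 : Fin n → ℝ), (Pi.single l 1 : Fin n → ℝ)) (Dv ((0 : Fin n → ℝ), (Pi.single k 1 : Fin n → ℝ)) (Dv ((Pi.single i 1 : Fin n → ℝ), (0 : Fin n → ℝ)) (fun z : (Fin n → ℝ) × (Fin n → ℝ) => c z.1 z.2))) (ξ 0, η 0) * d2 (fun u => ξ u i) 0)) * deriv (fun u => η u l) 0) * deriv (fun u => η u k) 0
        + (∑ i, ((∑ j, Dv ((0 : Fin n → ℝ), (Pi.single k 1 : Fin n → ℝ)) (Dv ((Pi.single j 1 : Fin n → ℝ), (0 : Fin n → ℝ)) (Dv ((Pi.single i 1 : Fin n → ℝ), (0 : Fin n → ℝ)) (fun z : (Fin n → ℝ) × (Fin n → ℝ) => c z.1 z.2))) (ξ 0, η 0) * deriv (fun u => ξ u j) 0) * deriv (fun u => ξ u i) 0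
            + Dv ((0 : Fin n → ℝ), (Pi.single k 1 : Fin n → ℝ)) (Dv ((Pi.single i 1 : Fin n → ℝ), (0 : Fin n → ℝ)) (fun z : (Fin n → ℝ) × (Fin n → ℝ) => c z.1 z.2)) (ξ 0, η 0) * d2 (fun u => ξ u i) 0)) * d2 (fun u => η u k) 0) := by
    rw [hmain]
    simp only [hsw4]
    simp only [hsw3a, hsw3b]
    simp only [hsw2]
  -- inverse identity and geodesic equation in Dv form
  have hdelta : ∀ i m : Fin n,
      (∑ k, Dv ((0 : Fin n → ℝ), (Pi.single k 1 : Fin n → ℝ)) (Dv ((Pi.single i 1 : Fin n → ℝ), (0 : Fin n → ℝ)) (fun z : (Fin n → ℝ) × (Fin n → ℝ) => c z.1 z.2)) (ξ 0, η 0) * cinv k m) = if i = m then 1 else 0 := by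
    intro i m
    have h := congrFun (congrFun hcinv.1 i) m
    rw [Matrix.mul_apply, Matrix.one_apply] at h
    simp only [Matrix.of_apply, pdc2 hc] at h
    exact h
  have hYdd2 : ∀ k : Fin n, d2 (fun u => η u k) 0
      + ∑ i, ∑ j, ∑ m, cinv k m * Dv ((0 : Fin n → ℝ), (Pi.single j 1 : Fin n → ℝ)) (Dv ((0 : Fin n → ℝ), (Pi.single i 1 : Fin n → ℝ)) (Dv ((Pi.single m 1 : Fin n → ℝ), (0 : Fin n → ℝ)) (fun z : (Fin n → ℝ) × (Fin n → ℝ) => c z.1 z.2))) (ξ 0, η 0)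
          * deriv (fun u => η u i) 0 * deriv (fun u => η u j) 0 = 0 := by
    intro k
    have h := hgeo2 k
    simp only [pdc3b hc] at h
    exact h
  have h1 : d2 (fun s => d2 (fun t => D (ξ s) (η t)) 0) 0
      = ∑ i, ∑ j, ∑ k, ∑ l,
          (pd2 (pd2 (pd1 (pd1 c i) j) k) l (ξ 0) (η 0)
            - ∑ m, ∑ m', pd2 (pd1 (pd1 c i) j) m (ξ 0) (η 0) * cinv m m'
                * pd2 (pd2 (pd1 c m') k) l (ξ 0) (η 0))
          * deriv (fun s => ξ s i) 0 * deriv (fun s => ξ s j) 0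
          * deriv (fun t => η t k) 0 * deriv (fun t => η t l) 0 := by
    rw [hmain2]
    simp only [pdc4 hc]
    simp only [pdc3a hc, pdc3b hc]
    exact final_algebra
      (fun i j k l => Dv ((0 : Fin n → ℝ), (Pi.single l 1 : Fin n → ℝ)) (Dv ((0 : Fin n → ℝ), (Pi.single k 1 : Fin n → ℝ)) (Dv ((Pi.single j 1 : Fin n → ℝ), (0 : Fin n → ℝ)) (Dv ((Pi.single i 1 : Fin n → ℝ), (0 : Fin n → ℝ)) (fun z : (Fin n → ℝ) × (Fin n → ℝ) => c z.1 z.2)))) (ξ 0, η 0))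
      (fun i j m => Dv ((0 : Fin n → ℝ), (Pi.single m 1 : Fin n → ℝ)) (Dv ((Pi.single j 1 : Fin n → ℝ), (0 : Fin n → ℝ)) (Dv ((Pi.single i 1 : Fin n → ℝ), (0 : Fin n → ℝ)) (fun z : (Fin n → ℝ) × (Fin n → ℝ) => c z.1 z.2))) (ξ 0, η 0))
      (fun m k l => Dv ((0 : Fin n → ℝ), (Pi.single l 1 : Fin n → ℝ)) (Dv ((0 : Fin n → ℝ), (Pi.single k 1 : Fin n → ℝ)) (Dv ((Pi.single m 1 : Fin n → ℝ), (0 : Fin n → ℝ)) (fun z : (Fin n → ℝ) × (Fin n → ℝ) => c z.1 z.2))) (ξ 0, η 0))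
      (Matrix.of fun i k => Dv ((0 : Fin n → ℝ), (Pi.single k 1 : Fin n → ℝ)) (Dv ((Pi.single i 1 : Fin n → ℝ), (0 : Fin n → ℝ)) (fun z : (Fin n → ℝ) × (Fin n → ℝ) => c z.1 z.2)) (ξ 0, η 0)) cinv
      (fun i => deriv (fun u => ξ u i) 0) (fun i => d2 (fun u => ξ u i) 0)
      (fun k => deriv (fun u => η u k) 0) (fun k => d2 (fun u => η u k) 0)
      hdelta hYdd2
  have h12 : (∑ i, ∑ j, ∑ k, ∑ l,
          (pd2 (pd2 (pd1 (pd1 c i) j) k) l (ξ 0) (η 0)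
            - ∑ m, ∑ m', pd2 (pd1 (pd1 c i) j) m (ξ 0) (η 0) * cinv m m'
                * pd2 (pd2 (pd1 c m') k) l (ξ 0) (η 0))
          * deriv (fun s => ξ s i) 0 * deriv (fun s => ξ s j) 0
          * deriv (fun t => η t k) 0 * deriv (fun t => η t l) 0)
      = -2 * ∑ i, ∑ k, ∑ l, ∑ j,
          ((1 / 2) * (-(pd2 (pd2 (pd1 (pd1 c i) j) k) l (ξ 0) (η 0))
            + ∑ β, ∑ a, pd2 (pd1 (pd1 c i) j) β (ξ 0) (η 0) * cinv β a
                * pd2 (pd2 (pd1 c a) k) l (ξ 0) (η 0)))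
          * deriv (fun s => ξ s i) 0 * deriv (fun t => η t k) 0
          * deriv (fun t => η t l) 0 * deriv (fun s => ξ s j) 0 := by
    simp only [Finset.mul_sum]
    refine Finset.sum_congr rfl fun i _ => ?_
    rw [rot3 (fun j k l => (pd2 (pd2 (pd1 (pd1 c i) j) k) l (ξ 0) (η 0)
            - ∑ m, ∑ m', pd2 (pd1 (pd1 c i) j) m (ξ 0) (η 0) * cinv m m'
                * pd2 (pd2 (pd1 c m') k) l (ξ 0) (η 0))
          * deriv (fun s => ξ s i) 0 * deriv (fun s => ξ s j) 0
          * deriv (fun t => η t k) 0 * deriv (fun t => η t l) 0)]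
    refine Finset.sum_congr rfl fun k _ => ?_
    refine Finset.sum_congr rfl fun l _ => ?_
    refine Finset.sum_congr rfl fun j _ => ?_
    ring
  exact ⟨h1, h1.trans h12⟩
end

section
/- Let c : M × M → [0,∞) be a smooth divergence (c(x,x) = 0 and first partials vanish on the diagonal) inducing the pseudo-metric h via the cross-difference. Then for any x, y ∈ M, T > 0, and any smooth curve γ with γ(0) = x, γ(T) = y, one has c(x, y) = ∫∫_{0 ≤ s ≤ t ≤ T} h_{(γ(s),γ(t))}(v_{s,t}, v_{s,t}) ds dt, where v_{s,t} = (γ̇(s), γ̇(t)). In particular, h uniquely determines c. -/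
section Aux

variable {E : Type*} [NormedAddCommGroup E] [NormedSpace ℝ E]

lemma line_hasDerivAt (z w : E) (t : ℝ) : HasDerivAt (fun s : ℝ => z + s • w) w t := by
  simpa using ((hasDerivAt_id t).smul_const w).const_add z

lemma inner_deriv {f : E × E → ℝ} (hf : ContDiff ℝ 2 f) (x y b : E) :
    deriv (fun t : ℝ => f (x, y + t • b)) 0 = fderiv ℝ f (x, y) ((0 : E), b) := by
  have hcurve : HasDerivAt (fun t : ℝ => ((x, y + t • b) : E × E)) ((0 : E), b) 0 :=
    HasDerivAt.prodMk (hasDerivAt_const (0:ℝ) x) (line_hasDerivAt y b 0)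
  have h1 := ((hf.differentiable two_ne_zero _).hasFDerivAt).comp_hasDerivAt 0 hcurve
  have h2 : HasDerivAt (fun t : ℝ => f (x, y + t • b)) (fderiv ℝ f (x, y) ((0 : E), b)) 0 := by
    simpa [Function.comp_def] using h1
  exact h2.deriv

lemma mixed_deriv {f : E × E → ℝ} (hf : ContDiff ℝ 2 f) (x y a b : E) :
    deriv (fun s : ℝ => deriv (fun t : ℝ => f (x + s • a, y + t • b)) 0) 0
      = fderiv ℝ (fderiv ℝ f) (x, y) (a, (0 : E)) ((0 : E), b) := by
  have h1 : (fun s : ℝ => deriv (fun t : ℝ => f (x + s • a, y + t • b)) 0)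
      = fun s : ℝ => fderiv ℝ f (x + s • a, y) ((0 : E), b) :=
    funext fun s => inner_deriv hf _ y b
  rw [h1]
  have hf' : ContDiff ℝ 1 (fderiv ℝ f) := hf.fderiv_right (by norm_num)
  have hcurve : HasDerivAt (fun s : ℝ => ((x + s • a, y) : E × E)) (a, (0 : E)) 0 :=
    HasDerivAt.prodMk (line_hasDerivAt x a 0) (hasDerivAt_const (0:ℝ) y)
  have hD : HasDerivAt (fun s : ℝ => fderiv ℝ f (x + s • a, y))
      (fderiv ℝ (fderiv ℝ f) (x, y) (a, (0 : E))) 0 := by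
    have h2 := ((hf'.differentiable one_ne_zero _).hasFDerivAt).comp_hasDerivAt 0 hcurve
    simpa [Function.comp_def] using h2
  have := (ContinuousLinearMap.apply ℝ ℝ ((0 : E), b)).hasFDerivAt.comp_hasDerivAt 0 hD
  simpa [Function.comp_def] using this.deriv

lemma fderiv_diag_snd {f : E × E → ℝ} (hf : ContDiff ℝ 2 f) (x : E)
    (h0 : fderiv ℝ (fun v => f (x, v)) x = 0) (b : E) :
    fderiv ℝ f (x, x) ((0 : E), b) = 0 := by
  have hι : HasFDerivAt (fun v : E => ((x, v) : E × E))
      ((0 : E →L[ℝ] E).prod (ContinuousLinearMap.id ℝ E)) x :=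
    HasFDerivAt.prodMk (hasFDerivAt_const x x) (hasFDerivAt_id x)
  have h2 := (((hf.differentiable two_ne_zero (x, x)).hasFDerivAt).comp x hι).fderiv
  have h4 : fderiv ℝ (f ∘ Prod.mk x) x b = fderiv ℝ f (x, x) ((0 : E), b) := by
    rw [h2]; rfl
  have h5 : fderiv ℝ (f ∘ Prod.mk x) x = 0 := h0
  rw [← h4, h5]; rfl

lemma key_formula {E : Type*} [NormedAddCommGroup E] [NormedSpace ℝ E]
    (c : E → E → ℝ)
    (hc : ContDiff ℝ 2 (fun z : E × E => c z.1 z.2))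
    (hdiag : ∀ x, c x x = 0)
    (hd2 : ∀ x, fderiv ℝ (fun v => c x v) x = 0)
    (T : ℝ) (γ : ℝ → E) (hγ : ContDiff ℝ (⊤ : ℕ∞) γ) :
    c (γ 0) (γ T) = ∫ t in (0:ℝ)..T, ∫ s in (0:ℝ)..t,
      -(deriv (fun s' : ℝ => deriv (fun t' : ℝ =>
          c (γ s + s' • deriv γ s) (γ t + t' • deriv γ t)) 0) 0) := by
  set f : E × E → ℝ := fun z => c z.1 z.2 with hfdef
  set F := fderiv ℝ f with hF
  set B := fderiv ℝ F with hB
  have hγd : Differentiable ℝ γ := hγ.differentiable (by simp)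
  have hγc : Continuous γ := hγ.continuous
  have hwc : Continuous (deriv γ) := hγ.continuous_deriv (by simp)
  have hF1 : ContDiff ℝ 1 F := hc.fderiv_right (by norm_num)
  have hFc : Continuous F := hF1.continuous
  have hBc : Continuous B := hF1.continuous_fderiv one_ne_zero
  have happ : Continuous fun p : ((E × E) →L[ℝ] ℝ) × (E × E) => p.1 p.2 :=
    isBoundedBilinearMap_apply.continuous
  have happ2 : Continuous fun p : ((E × E) →L[ℝ] (E × E) →L[ℝ] ℝ) × (E × E) × (E × E) =>
      p.1 p.2.1 p.2.2 := by
    have h1 : Continuous fun p : ((E × E) →L[ℝ] (E × E) →L[ℝ] ℝ) × (E × E) × (E × E) =>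
        ((p.1 p.2.1 : (E × E) →L[ℝ] ℝ), p.2.2) :=
      (isBoundedBilinearMap_apply.continuous.comp
        (continuous_fst.prodMk (continuous_fst.comp continuous_snd))).prodMk
        (continuous_snd.comp continuous_snd)
    exact happ.comp h1
  -- derivative of g t = f (γ 0, γ t)
  have hg : ∀ t : ℝ, HasDerivAt (fun t => f (γ 0, γ t))
      (F (γ 0, γ t) ((0 : E), deriv γ t)) t := by
    intro t
    have hcurve : HasDerivAt (fun t : ℝ => ((γ 0, γ t) : E × E)) ((0 : E), deriv γ t) t :=
      HasDerivAt.prodMk (hasDerivAt_const t (γ 0)) (hγd t).hasDerivAt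
    exact ((hc.differentiable two_ne_zero (γ 0, γ t)).hasFDerivAt).comp_hasDerivAt t hcurve
  have hgc : Continuous fun t => F (γ 0, γ t) ((0 : E), deriv γ t) :=
    happ.comp ((hFc.comp (continuous_const.prodMk hγc)).prodMk
      (continuous_const.prodMk hwc))
  have step1 : c (γ 0) (γ T) = ∫ t in (0:ℝ)..T, F (γ 0, γ t) ((0 : E), deriv γ t) := by
    have h4 := intervalIntegral.integral_eq_sub_of_hasDerivAt (fun t _ => hg t)
      (hgc.intervalIntegrable 0 T)
    have h5 : f (γ 0, γ 0) = 0 := hdiag (γ 0)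
    have h6 : f (γ 0, γ T) = c (γ 0) (γ T) := rfl
    rw [h4, h6, h5, sub_zero]
  rw [step1]
  apply intervalIntegral.integral_congr
  intro t _
  dsimp only
  -- for fixed t, FTC in s for p s = F (γ s, γ t) (0, deriv γ t)
  have hp : ∀ s : ℝ, HasDerivAt (fun s => F (γ s, γ t) ((0 : E), deriv γ t))
      (B (γ s, γ t) (deriv γ s, (0 : E)) ((0 : E), deriv γ t)) s := by
    intro s
    have hcurve : HasDerivAt (fun s : ℝ => ((γ s, γ t) : E × E)) (deriv γ s, (0 : E)) s :=
      HasDerivAt.prodMk (hγd s).hasDerivAt (hasDerivAt_const s (γ t))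
    have hD : HasDerivAt (fun s : ℝ => F (γ s, γ t)) (B (γ s, γ t) (deriv γ s, (0 : E))) s :=
      ((hF1.differentiable one_ne_zero (γ s, γ t)).hasFDerivAt).comp_hasDerivAt s hcurve
    exact (ContinuousLinearMap.apply ℝ ℝ ((0 : E), deriv γ t)).hasFDerivAt.comp_hasDerivAt s hD
  have hpc : Continuous fun s => B (γ s, γ t) (deriv γ s, (0 : E)) ((0 : E), deriv γ t) :=
    happ2.comp ((hBc.comp (hγc.prodMk continuous_const)).prodMk
      ((hwc.prodMk continuous_const).prodMk continuous_const))
  have hFTC := intervalIntegral.integral_eq_sub_of_hasDerivAt (fun s _ => hp s)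
    (hpc.intervalIntegrable 0 t)
  have hpt0 : F (γ t, γ t) ((0 : E), deriv γ t) = 0 :=
    fderiv_diag_snd hc (γ t) (hd2 (γ t)) (deriv γ t)
  have hmain : F (γ 0, γ t) ((0 : E), deriv γ t)
      = ∫ s in (0:ℝ)..t, -(B (γ s, γ t) (deriv γ s, (0 : E)) ((0 : E), deriv γ t)) := by
    rw [intervalIntegral.integral_neg, hFTC, hpt0, zero_sub, neg_neg]
  rw [hmain]
  apply intervalIntegral.integral_congr
  intro s _
  dsimp only
  congr 1
  exact (mixed_deriv hc (γ s) (γ t) (deriv γ s) (deriv γ t)).symm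

end Aux


/-- a smooth divergence cost `c` (vanishing to first order on the
diagonal) is recovered from the pseudo-metric `h` induced by its cross-difference:
`c(x, y) = ∫∫_{0≤s≤t≤T} h(v_{s,t}, v_{s,t}) ds dt` along any smooth curve `γ` from
`x` to `y`, where `v_{s,t} = (γ̇(s), γ̇(t))`.  In particular `h` uniquely
determines `c`. -/
theorem divergence_from_metric {n : ℕ}
    (c : (Fin n → ℝ) → (Fin n → ℝ) → ℝ)
    (hc : ContDiff ℝ 2 (fun z : (Fin n → ℝ) × (Fin n → ℝ) => c z.1 z.2))
    (hdiag : ∀ x, c x x = 0)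
    (hd1 : ∀ x, fderiv ℝ (fun u => c u x) x = 0)
    (hd2 : ∀ x, fderiv ℝ (fun v => c x v) x = 0)
    -- the pseudo-metric h as a quadratic form at (x, y)
    (h : (Fin n → ℝ) → (Fin n → ℝ) → ((Fin n → ℝ) × (Fin n → ℝ)) → ℝ)
    (hh : ∀ x y a b : Fin n → ℝ, h x y (a, b)
      = -deriv (fun s : ℝ => deriv (fun t : ℝ => c (x + s • a) (y + t • b)) 0) 0) :
    (∀ T : ℝ, 0 < T → ∀ γ : ℝ → (Fin n → ℝ), ContDiff ℝ (⊤ : ℕ∞) γ →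
      c (γ 0) (γ T) = ∫ t in (0:ℝ)..T, ∫ s in (0:ℝ)..t,
        h (γ s) (γ t) (deriv γ s, deriv γ t)) ∧
    (∀ c₂ : (Fin n → ℝ) → (Fin n → ℝ) → ℝ,
      ContDiff ℝ 2 (fun z : (Fin n → ℝ) × (Fin n → ℝ) => c₂ z.1 z.2) →
      (∀ x, c₂ x x = 0) →
      (∀ x, fderiv ℝ (fun u => c₂ u x) x = 0) →
      (∀ x, fderiv ℝ (fun v => c₂ x v) x = 0) →
      (∀ x y a b : Fin n → ℝ,
        deriv (fun s : ℝ => deriv (fun t : ℝ => c₂ (x + s • a) (y + t • b)) 0) 0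
        = deriv (fun s : ℝ => deriv (fun t : ℝ => c (x + s • a) (y + t • b)) 0) 0) →
      ∀ x y, c₂ x y = c x y) := by
  constructor
  · intro T _ γ hγ
    simp only [hh]
    exact key_formula c hc hdiag hd2 T γ hγ
  · intro c₂ hc₂ hdiag₂ _ hd2₂ heq x y
    set γ : ℝ → (Fin n → ℝ) := fun t => x + t • (y - x) with hγdef
    have hγ : ContDiff ℝ (⊤ : ℕ∞) γ := by
      apply contDiff_const.add
      exact (contDiff_id.smul contDiff_const)
    have hγ0 : γ 0 = x := by simp [hγdef]
    have hγ1 : γ 1 = y := by simp [hγdef]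
    have k1 := key_formula c hc hdiag hd2 1 γ hγ
    have k2 := key_formula c₂ hc₂ hdiag₂ hd2₂ 1 γ hγ
    rw [hγ0, hγ1] at k1 k2
    rw [k1, k2]
    congr 1
    funext t
    congr 1
    funext s
    rw [heq]
end
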